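/- arXiv:2310.18465 — 2 statements merged into one kernel-verified Lean document; each statement's English description precedes it below -/
import Mathlib

section
/- Let n, k be positive integers with k ≤ n/3 and 0 < Δ ≤ 1/(8k²). Define f on subsets S of [n] of size at most k by: f(S) = H_{|S|+k} − H_k if S = {1,...,|S|}; f(S) = H_{2k} − H_k − Δ if |S| = k and S ≠ {1,...,k}; and f(S) = H_{|S|+k} − H_k − Δ/k otherwise. Then f is submodular on sets of size at most k: for all A ⊆ B with |B| ≤ k−1 and a ∉ B, f(B∪{a}) − f(B) ≤ f(A∪{a}) − f(A). -/
/-- `H m`: the `m`-th harmonic number as a real. -/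
noncomputable def H (m : ℕ) : ℝ := ∑ j ∈ Finset.range m, 1 / ((j : ℝ) + 1)

/-- The set `{1, …, m}` of the first `m` elements of the ground set `Fin n`. -/
def prefixSet (n m : ℕ) : Finset (Fin n) := Finset.univ.filter (fun x => (x : ℕ) < m)

/-- The hard instance `f_{H₀}` defined via harmonic numbers with gap `Δ`. -/
noncomputable def hardF (n k : ℕ) (Δ : ℝ) (S : Finset (Fin n)) : ℝ :=
  if S = prefixSet n S.card then H (S.card + k) - H k
  else if S.card = k then H (2 * k) - H k - Δ
  else H (S.card + k) - H k - Δ / k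

/-!
Write `g m = H (m + k) - H k`. Away from cardinality `k`, `hardF` stays within `Δ / k` below
`g (card S)`, and it never exceeds `g (card S)`. So for `|A| = p < q = |B| < k` the marginal at `B`
is at most `1 / (q + k + 1) + Δ / k` and the one at `A` at least `1 / (p + k + 1) - Δ / k`.
The two harmonic increments differ by at least `1 / ((p + k + 1) (q + k + 1)) ≥ 1 / (4 k²)`,
which absorbs the error `2 Δ / k ≤ 2 Δ ≤ 1 / (4 k²)`.
-/

lemma H_succ (m : ℕ) : H (m + 1) = H m + 1 / ((m : ℝ) + 1) := by
  simp [H, Finset.sum_range_succ]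

lemma one_div_four_mul_sq_le_harmonic_gap {p q k : ℕ} (hpq : p < q) (hqk : q < k) :
    1 / (4 * (k : ℝ) ^ 2) ≤ 1 / ((p : ℝ) + k + 1) - 1 / ((q : ℝ) + k + 1) := by
  have hpq' : (p : ℝ) + 1 ≤ q := by exact_mod_cast hpq
  have hqk' : (q : ℝ) + 1 ≤ k := by exact_mod_cast hqk
  have hp0 : (0 : ℝ) ≤ p := p.cast_nonneg
  have hsub : 1 / ((p : ℝ) + k + 1) - 1 / ((q : ℝ) + k + 1) =
      ((q : ℝ) - p) / (((p : ℝ) + k + 1) * ((q : ℝ) + k + 1)) := by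
    field_simp
    ring
  rw [hsub]
  exact div_le_div₀ (by linarith) (by linarith) (by positivity) (by nlinarith)

section hardF

variable {n k : ℕ} {Δ : ℝ}

lemma hardF_le (hΔ : 0 ≤ Δ) (S : Finset (Fin n)) : hardF n k Δ S ≤ H (S.card + k) - H k := by
  have : 0 ≤ Δ / k := div_nonneg hΔ k.cast_nonneg
  unfold hardF
  split_ifs with _ hcard
  · rfl
  · rw [hcard, two_mul]
    linarith
  · linarith

lemma le_hardF (hΔ : 0 ≤ Δ) {S : Finset (Fin n)} (hS : S.card ≠ k) :
    H (S.card + k) - H k - Δ / k ≤ hardF n k Δ S := by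
  have : 0 ≤ Δ / k := div_nonneg hΔ k.cast_nonneg
  unfold hardF
  split_ifs <;> linarith

lemma hardF_insert_sub_le (hΔ : 0 ≤ Δ) {S : Finset (Fin n)} {a : Fin n} (ha : a ∉ S)
    (hS : S.card ≠ k) :
    hardF n k Δ (insert a S) - hardF n k Δ S ≤ 1 / ((S.card : ℝ) + k + 1) + Δ / k := by
  have hle := hardF_le (k := k) hΔ (insert a S)
  have hge := le_hardF hΔ hS
  rw [Finset.card_insert_of_notMem ha, add_right_comm, H_succ] at hle
  push_cast at hle
  linarith

lemma le_hardF_insert_sub (hΔ : 0 ≤ Δ) {S : Finset (Fin n)} {a : Fin n} (ha : a ∉ S)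
    (hS : S.card + 1 ≠ k) :
    1 / ((S.card : ℝ) + k + 1) - Δ / k ≤ hardF n k Δ (insert a S) - hardF n k Δ S := by
  have hle := hardF_le (k := k) hΔ S
  have hge := le_hardF (S := insert a S) hΔ (by rwa [Finset.card_insert_of_notMem ha])
  rw [Finset.card_insert_of_notMem ha, add_right_comm, H_succ] at hge
  push_cast at hge
  linarith

end hardF

theorem stmt_4_general (n k : ℕ)
    (Δ : ℝ) (hΔ0 : 0 < Δ) (hΔ : Δ ≤ 1 / (8 * (k : ℝ) ^ 2)) :
    ∀ A B : Finset (Fin n), A ⊆ B → B.card ≤ k - 1 → ∀ a ∉ B,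
      hardF n k Δ (insert a B) - hardF n k Δ B ≤
        hardF n k Δ (insert a A) - hardF n k Δ A := by
  intro A B hAB hB a haB
  obtain rfl | hAB := hAB.eq_or_ssubset
  · rfl
  have hpq : A.card < B.card := Finset.card_lt_card hAB
  have hgap := one_div_four_mul_sq_le_harmonic_gap (k := k) hpq (by omega)
  have hΔk : Δ / k ≤ Δ := div_le_self hΔ0.le (by exact_mod_cast (by omega : 1 ≤ k))
  have hmargB := hardF_insert_sub_le (k := k) hΔ0.le haB (by omega)
  have hmargA := le_hardF_insert_sub (k := k) hΔ0.le (fun h => haB (hAB.subset h)) (by omega)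
  have h2Δ : 2 * Δ ≤ 1 / (4 * (k : ℝ) ^ 2) := by
    rw [show 1 / (4 * (k : ℝ) ^ 2) = 2 * (1 / (8 * (k : ℝ) ^ 2)) by ring]
    linarith
  linarith

/-- the hard instance is submodular (diminishing returns) on sets of size ≤ k. -/
theorem stmt_4 (n k : ℕ) (hn : 0 < n) (hk : 0 < k) (hkn : 3 * k ≤ n)
    (Δ : ℝ) (hΔ0 : 0 < Δ) (hΔ : Δ ≤ 1 / (8 * (k : ℝ) ^ 2)) :
    ∀ A B : Finset (Fin n), A ⊆ B → B.card ≤ k - 1 → ∀ a ∉ B,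
      hardF n k Δ (insert a B) - hardF n k Δ B ≤
        hardF n k Δ (insert a A) - hardF n k Δ A :=
  stmt_4_general n k Δ hΔ0 hΔ
end

section
/- Let f: Finset (Fin n) → ℝ be monotone nondecreasing and submodular with f(∅) = 0, let c := 1 − min over S and a∉S of (f(S∪{a}) − f(S))/f({a}) (assuming f({a}) > 0 for all a), let (a_1,...,a_l) be a sequence of distinct elements with S^(i) := {a_1,...,a_i}, and let T be any set. Then f(T) ≤ c·Σ_{i: a_i ∈ S^(l)∖T} (f(S^(i)) − f(S^(i−1))) + Σ_{i: a_i ∈ S^(l)∩T} (f(S^(i)) − f(S^(i−1))) + Σ_{a ∈ T∖S^(l)} (f(S^(l)∪{a}) − f(S^(l))). -/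
/-!
Along the chain `S⁽⁰⁾ ⊆ ⋯ ⊆ S⁽ˡ⁾` every step adds `aᵢ ∉ S⁽ⁱ⁻¹⁾`, so by submodularity its gain is at
most `f {aᵢ}`. Adding the elements of `S⁽ˡ⁾ \ T` to `T` one at a time gains at least `(1 - c) f {x}`
each, by the definition of the curvature `c`; hence
`f T + (1 - c) ∑_{aᵢ ∉ T} (f S⁽ⁱ⁾ - f S⁽ⁱ⁻¹⁾) ≤ f (T ∪ S⁽ˡ⁾)`. Adding the elements of `T \ S⁽ˡ⁾` to
`S⁽ˡ⁾` instead, diminishing returns give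
`f (T ∪ S⁽ˡ⁾) ≤ f S⁽ˡ⁾ + ∑_{x ∈ T \ S⁽ˡ⁾} (f (S⁽ˡ⁾ ∪ {x}) - f S⁽ˡ⁾)`, and `f S⁽ˡ⁾` telescopes into the
two sums over the chain.
-/

open Finset

section SetFunction

variable {α : Type*} [DecidableEq α] {f : Finset α → ℝ}

theorem marginal_antitone_of_submodular
    (hsub : ∀ A B : Finset α, f (A ∪ B) + f (A ∩ B) ≤ f A + f B)
    {A B : Finset α} {x : α} (hAB : A ⊆ B) (hxB : x ∉ B) :
    f (insert x B) - f B ≤ f (insert x A) - f A := by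
  have h := hsub (insert x A) B
  rw [insert_union, union_eq_right.2 hAB, insert_inter_of_notMem hxB, inter_eq_left.2 hAB] at h
  linarith

theorem marginal_le_apply_singleton
    (hsub : ∀ A B : Finset α, f (A ∪ B) + f (A ∩ B) ≤ f A + f B) (hempty : f ∅ = 0)
    {A : Finset α} {x : α} (hx : x ∉ A) :
    f (insert x A) - f A ≤ f {x} := by
  simpa [hempty] using marginal_antitone_of_submodular hsub (empty_subset A) hx

theorem le_add_sum_marginal
    (hsub : ∀ A B : Finset α, f (A ∪ B) + f (A ∩ B) ≤ f A + f B)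
    (C U : Finset α) (hUC : Disjoint U C) :
    f (C ∪ U) ≤ f C + ∑ x ∈ U, (f (insert x C) - f C) := by
  induction U using Finset.induction_on with
  | empty => simp
  | @insert y U hy ih =>
    rw [disjoint_insert_left] at hUC
    have hyCU : y ∉ C ∪ U := by simp [hUC.1, hy]
    have := marginal_antitone_of_submodular hsub subset_union_left hyCU
    rw [union_insert, sum_insert hy]
    linarith [ih hUC.2]

theorem add_mul_sum_singleton_le {κ : ℝ}
    (hκ : ∀ (A : Finset α) (x : α), x ∉ A → κ * f {x} ≤ f (insert x A) - f A)
    (T V : Finset α) :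
    f T + κ * ∑ x ∈ V \ T, f {x} ≤ f (T ∪ V) := by
  induction V using Finset.induction_on with
  | empty => simp
  | @insert y V hy ih =>
    by_cases hyT : y ∈ T
    · rwa [insert_sdiff_of_mem _ hyT, union_insert, insert_eq_of_mem (mem_union_left _ hyT)]
    · have hyVT : y ∉ V \ T := fun h => hy (mem_sdiff.1 h).1
      have hyTV : y ∉ T ∪ V := by simp [hyT, hy]
      rw [insert_sdiff_of_notMem _ hyT, sum_insert hyVT, union_insert, mul_add]
      linarith [hκ _ _ hyTV]

def marginalRatios (f : Finset α → ℝ) : Set ℝ :=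
  {r | ∃ (S : Finset α) (a : α), a ∉ S ∧ r = (f (insert a S) - f S) / f {a}}

theorem nonneg_of_mem_marginalRatios (hmono : Monotone f) (hpos : ∀ a, 0 < f {a})
    {r : ℝ} (hr : r ∈ marginalRatios f) : 0 ≤ r := by
  obtain ⟨A, x, -, rfl⟩ := hr
  exact div_nonneg (sub_nonneg.2 (hmono (subset_insert x A))) (hpos x).le

theorem sInf_marginalRatios_mul_le (hmono : Monotone f) (hpos : ∀ a, 0 < f {a})
    {A : Finset α} {x : α} (hx : x ∉ A) :
    sInf (marginalRatios f) * f {x} ≤ f (insert x A) - f A := by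
  have hmem : (f (insert x A) - f A) / f {x} ∈ marginalRatios f := ⟨A, x, hx, rfl⟩
  exact (le_div_iff₀ (hpos x)).1 <|
    csInf_le ⟨0, fun _ hr => nonneg_of_mem_marginalRatios hmono hpos hr⟩ hmem

end SetFunction

section Chain

variable {α : Type*} [DecidableEq α] {a : ℕ → α}

theorem image_Icc_one_eq_insert_pred {i : ℕ} (hi : 1 ≤ i) :
    (Icc 1 i).image a = insert (a i) ((Icc 1 (i - 1)).image a) := by
  rw [← image_insert]
  congr 1
  ext j
  simp only [mem_Icc, mem_insert]
  omega

theorem apply_notMem_image_Icc_pred {l i : ℕ} (hinj : Set.InjOn a (Icc 1 l))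
    (hi : i ∈ Icc 1 l) : a i ∉ (Icc 1 (i - 1)).image a := by
  rw [mem_Icc] at hi
  simp only [mem_image, mem_Icc, not_exists, not_and]
  intro j hj hji
  have := hinj (by simp only [coe_Icc, Set.mem_Icc]; omega)
    (by simp only [coe_Icc, Set.mem_Icc]; omega) hji
  omega

theorem sum_Icc_one_sub_pred (g : ℕ → ℝ) (m : ℕ) :
    ∑ i ∈ Icc 1 m, (g i - g (i - 1)) = g m - g 0 := by
  induction m with
  | zero => simp
  | succ m ih =>
    rw [sum_Icc_succ_top (by omega), ih]
    simp

theorem add_mul_sum_marginal_chain_le {f : Finset α → ℝ}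
    (hsub : ∀ A B : Finset α, f (A ∪ B) + f (A ∩ B) ≤ f A + f B) (hempty : f ∅ = 0)
    {κ : ℝ} (hκ0 : 0 ≤ κ)
    (hκ : ∀ (A : Finset α) (x : α), x ∉ A → κ * f {x} ≤ f (insert x A) - f A)
    {l : ℕ} (hinj : Set.InjOn a (Icc 1 l)) (T : Finset α) :
    f T + κ * ∑ i ∈ (Icc 1 l).filter (fun i => a i ∉ T),
        (f ((Icc 1 i).image a) - f ((Icc 1 (i - 1)).image a))
      ≤ f (T ∪ (Icc 1 l).image a) := by
  have hstep : ∀ i ∈ Icc 1 l,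
      f ((Icc 1 i).image a) - f ((Icc 1 (i - 1)).image a) ≤ f {a i} := fun i hi => by
    rw [image_Icc_one_eq_insert_pred (mem_Icc.1 hi).1]
    exact marginal_le_apply_singleton hsub hempty (apply_notMem_image_Icc_pred hinj hi)
  have hsum : ∑ x ∈ (Icc 1 l).image a \ T, f {x}
      = ∑ i ∈ (Icc 1 l).filter (fun i => a i ∉ T), f {a i} := by
    rw [sdiff_eq_filter, filter_image, sum_image]
    exact hinj.mono (coe_subset.2 (filter_subset _ _))
  calc _ ≤ f T + κ * ∑ i ∈ (Icc 1 l).filter (fun i => a i ∉ T), f {a i} := by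
        gcongr with i hi
        exact hstep i (mem_filter.1 hi).1
    _ = f T + κ * ∑ x ∈ (Icc 1 l).image a \ T, f {x} := by rw [hsum]
    _ ≤ _ := add_mul_sum_singleton_le hκ T _

end Chain

/-- Lemma 2.1 of Nemhauser–Wolsey–Fisher: curvature bound. -/
theorem stmt_15 (n l : ℕ) (f : Finset (Fin n) → ℝ)
    (hmono : ∀ A B : Finset (Fin n), A ⊆ B → f A ≤ f B)
    (hsub : ∀ A B : Finset (Fin n), f (A ∪ B) + f (A ∩ B) ≤ f A + f B)
    (hempty : f ∅ = 0)
    (hpos : ∀ a : Fin n, 0 < f {a})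
    (c : ℝ)
    (hc : c = 1 - sInf {r : ℝ | ∃ (S : Finset (Fin n)) (a : Fin n), a ∉ S ∧
        r = (f (insert a S) - f S) / f {a}})
    (a : ℕ → Fin n) (hinj : Set.InjOn a (Finset.Icc 1 l))
    (S : ℕ → Finset (Fin n)) (hS : ∀ j, S j = (Finset.Icc 1 j).image a)
    (T : Finset (Fin n)) :
    f T ≤ c * (∑ i ∈ (Finset.Icc 1 l).filter (fun i => a i ∉ T), (f (S i) - f (S (i - 1))))
        + (∑ i ∈ (Finset.Icc 1 l).filter (fun i => a i ∈ T), (f (S i) - f (S (i - 1))))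
        + ∑ x ∈ T \ S l, (f (insert x (S l)) - f (S l)) := by
  have hmonotone : Monotone f := fun A B h => hmono A B h
  have hκ : 1 - c = sInf (marginalRatios f) := by rw [hc]; exact sub_sub_cancel _ _
  have hlower := add_mul_sum_marginal_chain_le hsub hempty
    (hκ ▸ Real.sInf_nonneg fun _ hr => nonneg_of_mem_marginalRatios hmonotone hpos hr)
    (fun A x hx => hκ ▸ sInf_marginalRatios_mul_le hmonotone hpos hx) hinj T
  have hupper := le_add_sum_marginal hsub _ (T \ (Icc 1 l).image a) sdiff_disjoint
  rw [union_sdiff_self_eq_union, union_comm] at hupper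
  have htelescope := sum_filter_add_sum_filter_not (Icc 1 l) (fun i => a i ∈ T)
    fun i => f ((Icc 1 i).image a) - f ((Icc 1 (i - 1)).image a)
  have hchain_start : f ((Icc 1 0).image a) = 0 := by simp [hempty]
  rw [sum_Icc_one_sub_pred (fun i => f ((Icc 1 i).image a)) l, hchain_start] at htelescope
  simp only [hS]
  linarith
end
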